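/- arXiv:1605.08010 — 2 statements merged into one kernel-verified Lean document; each statement's English description precedes it below -/
import Mathlib

section
/- Let (c_n) be a nonnegative real sequence satisfying c_n ≤ (1 - p/n) c_{n-1} + D/n² for all n > N, where p > 1, D ≥ 0, and N ≥ p is an integer. Then c_n = O(1/n), i.e. there exists C such that c_n ≤ C/n for all n ≥ 1. -/
/-!
Choose `C ≥ max 0 (D / (p - 1))` so large that `c n ≤ C / n` for `1 ≤ n ≤ N`. Past `N` the
coefficient `1 - p / n` is nonnegative, so the bound on `c (n - 1)` feeds into the recursion, and
since `D ≤ C (p - 1)` the recursion maps the bound `C / (n - 1)` into `C / n`.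
-/

lemma exists_ge_and_forall_le {α : Type*} [LinearOrder α] (f : ℕ → α) (a : α) (N : ℕ) :
    ∃ C, a ≤ C ∧ ∀ n ≤ N, f n ≤ C := by
  have : Nonempty α := ⟨a⟩
  obtain ⟨M, hM⟩ := ((Finset.range (N + 1)).image f).exists_le
  refine ⟨max a M, le_max_left _ _, fun n hn => (hM _ ?_).trans (le_max_right _ _)⟩
  exact Finset.mem_image_of_mem f (Finset.mem_range_succ_iff.mpr hn)

lemma one_sub_div_mul_div_add_div_sq_le_div {p C D y : ℝ} (hp : 1 ≤ p) (hC : 0 ≤ C)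
    (hD : D ≤ C * (p - 1)) (hy : 0 < y) :
    (1 - p / (y + 1)) * (C / y) + D / (y + 1) ^ 2 ≤ C / (y + 1) := by
  have hDy : D * y ≤ C * (p - 1) * (y + 1) := calc
    D * y ≤ C * (p - 1) * y := by gcongr
    _ ≤ C * (p - 1) * (y + 1) :=
      mul_le_mul_of_nonneg_left (by linarith) (mul_nonneg hC (by linarith))
  have hgap : C / (y + 1) - ((1 - p / (y + 1)) * (C / y) + D / (y + 1) ^ 2)
      = (C * (p - 1) * (y + 1) - D * y) / (y * (y + 1) ^ 2) := by
    field_simp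
    ring
  rw [← sub_nonneg, hgap]
  exact div_nonneg (sub_nonneg.mpr hDy) (by positivity)

theorem recursion_bound_general (c : ℕ → ℝ) (p D : ℝ) (N : ℕ)
    (hp : 1 < p) (hN : p ≤ (N : ℝ))
    (hrec : ∀ n > N, c n ≤ (1 - p / (n : ℝ)) * c (n - 1) + D / (n : ℝ) ^ 2) :
    ∃ C : ℝ, ∀ n ≥ 1, c n ≤ C / (n : ℝ) := by
  obtain ⟨C, hCge, hbound⟩ := exists_ge_and_forall_le (fun n => n * c n) (max 0 (D / (p - 1))) N
  have hC : 0 ≤ C := (le_max_left _ _).trans hCge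
  have hCD : D ≤ C * (p - 1) :=
    (div_le_iff₀ (by linarith)).mp ((le_max_right _ _).trans hCge)
  have hbase : ∀ n, 1 ≤ n → n ≤ N → c n ≤ C / n := fun n hn hnN =>
    (le_div_iff₀' (by exact_mod_cast hn)).mpr (hbound n hnN)
  refine ⟨C, fun n hn => ?_⟩
  induction n, hn using Nat.le_induction with
  | base => exact hbase 1 le_rfl (by exact_mod_cast (hp.trans_le hN).le)
  | succ n hn ih =>
    rcases le_or_gt (n + 1) N with hle | hlt
    · exact hbase _ (by omega) hle
    have hpn : p ≤ n + 1 := hN.trans (by exact_mod_cast hlt.le)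
    push_cast
    calc c (n + 1) ≤ (1 - p / (n + 1)) * c n + D / (n + 1) ^ 2 := by simpa using hrec (n + 1) hlt
      _ ≤ (1 - p / (n + 1)) * (C / n) + D / (n + 1) ^ 2 := by
        gcongr
        rw [sub_nonneg, div_le_one (by positivity)]
        exact hpn
      _ ≤ C / (n + 1) :=
        one_sub_div_mul_div_add_div_sq_le_div hp.le hC hCD (by exact_mod_cast hn)

theorem recursion_bound (c : ℕ → ℝ) (p D : ℝ) (N : ℕ)
    (hc : ∀ n, 0 ≤ c n) (hp : 1 < p) (hD : 0 ≤ D) (hN : p ≤ (N : ℝ))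
    (hrec : ∀ n > N, c n ≤ (1 - p / (n : ℝ)) * c (n - 1) + D / (n : ℝ) ^ 2) :
    ∃ C : ℝ, ∀ n ≥ 1, c n ≤ C / (n : ℝ) :=
  recursion_bound_general c p D N hp hN hrec
end

section
/- Let (Δ_n) be a sequence of ℝ^d-valued integrable random vectors adapted to a filtration (F_n), with E[‖Δ_n‖² | F_{n-1}] ≤ ‖Δ_{n-1}‖² + cβ²/n² (1 + ‖Δ_{n-1}‖²) for all n ≥ 1 and constants c, β > 0. Then ‖Δ_n‖² converges almost surely to a finite limit. -/
open MeasureTheory Filter Finset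
open scoped Topology

/-!
If `E[X_{n+1} | ℱ_n] ≤ (1 + g_n) X_n` with `X ≥ 0` and `∑ g_n < ∞`, then dividing `X_n` by the
partial products `P_n = ∏_{k<n} (1 + g_k)` gives a nonnegative supermartingale, which converges
almost surely; since `P_n` converges as well, so does `X_n = P_n · (X_n / P_n)`.
The hypothesis of the theorem is exactly this recursion for `X_n = 1 + ‖Δ_n‖²` and
`g_n = cβ² / (n + 1)²`.
-/

theorem Finset.prod_one_add_pos {ι : Type*} {g : ι → ℝ} (hg : ∀ i, 0 ≤ g i) (s : Finset ι) :
    0 < ∏ i ∈ s, (1 + g i) :=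
  prod_pos fun i _ => by linarith [hg i]

namespace MeasureTheory

variable {Ω : Type*} {m0 : MeasurableSpace Ω} {μ : Measure Ω} [IsFiniteMeasure μ]
  {ℱ : Filtration ℕ m0}

theorem Supermartingale.exists_ae_tendsto_of_nonneg {f : ℕ → Ω → ℝ}
    (hf : Supermartingale f ℱ μ) (hf_nonneg : ∀ n, 0 ≤ f n) :
    ∀ᵐ ω ∂μ, ∃ l, Tendsto (fun n => f n ω) atTop (𝓝 l) := by
  have hbdd : ∀ n, eLpNorm ((-f) n) 1 μ ≤ ENNReal.ofReal (∫ ω, f 0 ω ∂μ) := by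
    intro n
    rw [Pi.neg_apply, eLpNorm_neg, eLpNorm_one_eq_lintegral_enorm,
      ← ofReal_integral_norm_eq_lintegral_enorm (hf.integrable n)]
    refine ENNReal.ofReal_le_ofReal ?_
    simp_rw [Real.norm_of_nonneg (hf_nonneg n _)]
    simpa using hf.setIntegral_le (Nat.zero_le n) MeasurableSet.univ
  filter_upwards [hf.neg.exists_ae_tendsto_of_bdd hbdd] with ω ⟨l, hl⟩
  exact ⟨-l, by simpa using hl.neg⟩

variable {X : ℕ → Ω → ℝ} {g : ℕ → ℝ}

theorem supermartingale_inv_prod_one_add_smul (hg : ∀ n, 0 ≤ g n) (hX : StronglyAdapted ℱ X)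
    (hX_int : ∀ n, Integrable (X n) μ)
    (hX_cond : ∀ n, μ[X (n + 1) | ℱ n] ≤ᵐ[μ] (1 + g n) • X n) :
    Supermartingale (fun n => (∏ k ∈ range n, (1 + g k))⁻¹ • X n) ℱ μ := by
  refine supermartingale_nat (fun n => (hX n).const_smul _) (fun n => (hX_int n).smul _)
    fun n => ?_
  have hP : ∏ k ∈ range n, (1 + g k) ≠ 0 := (prod_one_add_pos hg _).ne'
  have hg1 : 1 + g n ≠ 0 := by linarith [hg n]
  filter_upwards [condExp_smul (∏ k ∈ range (n + 1), (1 + g k))⁻¹ (X (n + 1)) (ℱ n),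
    hX_cond n] with ω hω hωX
  rw [hω]
  simp only [Pi.smul_apply, smul_eq_mul] at hωX ⊢
  calc (∏ k ∈ range (n + 1), (1 + g k))⁻¹ * μ[X (n + 1) | ℱ n] ω
      ≤ (∏ k ∈ range (n + 1), (1 + g k))⁻¹ * ((1 + g n) * X n ω) := by
        gcongr
        exact inv_nonneg.2 (prod_one_add_pos hg _).le
    _ = (∏ k ∈ range n, (1 + g k))⁻¹ * X n ω := by
        rw [prod_range_succ]
        field_simp

theorem exists_ae_tendsto_of_condExp_le_one_add_smul (hg : ∀ n, 0 ≤ g n) (hg_sum : Summable g)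
    (hX : StronglyAdapted ℱ X) (hX_int : ∀ n, Integrable (X n) μ) (hX_nonneg : ∀ n, 0 ≤ X n)
    (hX_cond : ∀ n, μ[X (n + 1) | ℱ n] ≤ᵐ[μ] (1 + g n) • X n) :
    ∀ᵐ ω ∂μ, ∃ l, Tendsto (fun n => X n ω) atTop (𝓝 l) := by
  have hP_pos : ∀ n, 0 < ∏ k ∈ range n, (1 + g k) := fun n => prod_one_add_pos hg _
  have hP_lim := (Real.multipliable_one_add_of_summable hg_sum).tendsto_prod_tprod_nat
  have hZ_nonneg : ∀ n, 0 ≤ (∏ k ∈ range n, (1 + g k))⁻¹ • X n := fun n =>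
    smul_nonneg (inv_nonneg.2 (hP_pos n).le) (hX_nonneg n)
  filter_upwards [(supermartingale_inv_prod_one_add_smul hg hX hX_int
    hX_cond).exists_ae_tendsto_of_nonneg hZ_nonneg] with ω ⟨l, hl⟩
  refine ⟨l * ∏' k, (1 + g k), (hl.mul hP_lim).congr fun n => ?_⟩
  simp only [Pi.smul_apply, smul_eq_mul]
  field_simp [(hP_pos n).ne']

end MeasureTheory

theorem norm_sq_converges_general {Ω : Type*} {m0 : MeasurableSpace Ω}
    {μ : Measure Ω} [IsProbabilityMeasure μ] {d : ℕ}
    (ℱ : Filtration ℕ m0) (Δ : ℕ → Ω → EuclideanSpace ℝ (Fin d))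
    (c β : ℝ) (hc : 0 < c)
    (hadapted : Adapted ℱ Δ)
    (hint : ∀ n, Integrable (fun ω => ‖Δ n ω‖ ^ 2) μ)
    (hrec : ∀ n ≥ 1, ∀ᵐ ω ∂μ,
      (μ[fun ω => ‖Δ n ω‖ ^ 2 | ℱ (n - 1)]) ω
        ≤ ‖Δ (n - 1) ω‖ ^ 2 + c * β ^ 2 / (n : ℝ) ^ 2 * (1 + ‖Δ (n - 1) ω‖ ^ 2)) :
    ∀ᵐ ω ∂μ, ∃ l : ℝ, Tendsto (fun n => ‖Δ n ω‖ ^ 2) atTop (nhds l) := by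
  set g : ℕ → ℝ := fun n => c * β ^ 2 / ((n : ℝ) + 1) ^ 2
  have hg : ∀ n, 0 ≤ g n := fun n => div_nonneg (mul_nonneg hc.le (sq_nonneg β)) (sq_nonneg _)
  have hg_sum : Summable g := by
    have := (summable_nat_add_iff 1).2 (Real.summable_one_div_nat_pow.2 one_lt_two)
    simpa [g, div_eq_mul_inv] using this.mul_left (c * β ^ 2)
  have hX_cond : ∀ n, μ[fun ω => 1 + ‖Δ (n + 1) ω‖ ^ 2 | ℱ n]
      ≤ᵐ[μ] (1 + g n) • fun ω => 1 + ‖Δ n ω‖ ^ 2 := by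
    intro n
    have hconst : μ[fun _ => (1 : ℝ) | ℱ n] = fun _ => 1 := condExp_const (ℱ.le n) 1
    filter_upwards [condExp_add (m := ℱ n) (integrable_const (1 : ℝ)) (hint (n + 1)),
      hrec (n + 1) (Nat.le_add_left 1 n)] with ω hω hωrec
    rw [← Pi.add_def, hω, Pi.add_apply, hconst]
    simp only [Nat.add_sub_cancel, Nat.cast_add, Nat.cast_one] at hωrec
    simp only [Pi.smul_apply, smul_eq_mul, g]
    linarith
  have hX : Adapted ℱ fun n ω => 1 + ‖Δ n ω‖ ^ 2 := fun n =>
    (continuous_const.add (continuous_norm.pow 2)).measurable.comp (hadapted n)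
  filter_upwards [exists_ae_tendsto_of_condExp_le_one_add_smul hg hg_sum hX.stronglyAdapted
    (fun n => (integrable_const 1).add (hint n)) (fun n ω => by positivity) hX_cond]
    with ω ⟨l, hl⟩
  exact ⟨l - 1, by simpa using hl.sub_const 1⟩

theorem norm_sq_converges {Ω : Type*} {m0 : MeasurableSpace Ω}
    {μ : Measure Ω} [IsProbabilityMeasure μ] {d : ℕ}
    (ℱ : Filtration ℕ m0) (Δ : ℕ → Ω → EuclideanSpace ℝ (Fin d))
    (c β : ℝ) (hc : 0 < c) (hβ : 0 < β)
    (hadapted : Adapted ℱ Δ)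
    (hint : ∀ n, Integrable (fun ω => ‖Δ n ω‖ ^ 2) μ)
    (hrec : ∀ n ≥ 1, ∀ᵐ ω ∂μ,
      (μ[fun ω => ‖Δ n ω‖ ^ 2 | ℱ (n - 1)]) ω
        ≤ ‖Δ (n - 1) ω‖ ^ 2 + c * β ^ 2 / (n : ℝ) ^ 2 * (1 + ‖Δ (n - 1) ω‖ ^ 2)) :
    ∀ᵐ ω ∂μ, ∃ l : ℝ, Tendsto (fun n => ‖Δ n ω‖ ^ 2) atTop (nhds l) :=
  norm_sq_converges_general ℱ Δ c β hc hadapted hint hrec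
end
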